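/- arXiv:1612.07552 — 3 statements merged into one kernel-verified Lean document; each statement's English description precedes it below -/
import Mathlib

section
/- Let G be a finite simple connected graph with at least two vertices and diameter d(G), and let f be a minimum gradation greyscale of G. If u and v are vertices with f(u) = 0 and f(v) = 1, then u and v are antipodal, i.e. d(u,v) = d(G). -/
open SimpleGraph

/-- A greyscale of a graph on vertex set `V`: a map to `[0,1]` attaining both `0` and `1`. -/
def IsGreyscale {V : Type*} (f : V → ℝ) : Prop :=
  (∀ w, 0 ≤ f w ∧ f w ≤ 1) ∧ (∃ a, f a = 0) ∧ (∃ b, f b = 1)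

/-- The grey tone of an edge: the absolute difference of the tones of its endpoints. -/
noncomputable def greyTone {V : Type*} (f : V → ℝ) : Sym2 V → ℝ :=
  Sym2.lift ⟨fun a b => |f a - f b|, fun _ _ => abs_sub_comm _ _⟩

/-- The edge-colour-increase mapping `F(u,v) = |f u - f v| / d(u,v)` (and `0` on the diagonal). -/
noncomputable def ecim {V : Type*} (G : SimpleGraph V) (f : V → ℝ) (u v : V) : ℝ :=
  letI := Classical.dec (u = v)
  if u = v then 0 else |f u - f v| / (G.dist u v : ℝ)

/-- The support greyscale for antipodal vertices `u, v` of a graph of diameter `D`. -/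
noncomputable def supportGreyscale {V : Type*} (G : SimpleGraph V) (u v : V) (D : ℕ)
    (w : V) : ℝ :=
  ((G.dist w u : ℝ) - (G.dist w v : ℝ) + (D : ℝ)) / (2 * (D : ℝ))

/-- The gradation vector: the grey tones of all edges, sorted in decreasing order. -/
noncomputable def gradVec {V : Type*} [Fintype V] (G : SimpleGraph V) (f : V → ℝ) : List ℝ :=
  letI := Classical.decEq V
  letI : DecidableRel G.Adj := Classical.decRel _
  (G.edgeFinset.val.map (greyTone f)).sort (· ≥ ·)

/-- Lexicographic comparison of gradation vectors: `f` is smaller than or equal to `g`. -/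
def GradLE {V : Type*} [Fintype V] (G : SimpleGraph V) (f g : V → ℝ) : Prop :=
  gradVec G f = gradVec G g ∨ List.Lex (· < ·) (gradVec G f) (gradVec G g)

/-- A minimum gradation greyscale: a greyscale whose gradation vector is lexicographically
minimal among the gradation vectors of all greyscales. -/
def IsMinGradGreyscale {V : Type*} [Fintype V] (G : SimpleGraph V) (f : V → ℝ) : Prop :=
  IsGreyscale f ∧ ∀ g : V → ℝ, IsGreyscale g → GradLE G f g


/-! A shortest `u`–`v` path has `d(u,v)` edges whose tones add up to at least `|f u - f v| = 1`,
so if `d(u,v) < D` some edge has tone `> 1/D`. On the other hand, for an antipodal pair `a, b` the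
support greyscale `w ↦ (d(w,a) - d(w,b) + D) / 2D` has all tones `≤ 1/D`. Since gradation vectors
are sorted decreasingly, their lexicographic order compares the largest tones first, so a
minimum gradation greyscale cannot have a tone `> 1/D`. -/

theorem List.forall_le_of_lex_of_pairwise_ge {α : Type*} [LinearOrder α] {l₁ l₂ : List α}
    (hs : l₁.Pairwise (· ≥ ·)) (h : l₁ = l₂ ∨ List.Lex (· < ·) l₁ l₂) {c : α}
    (h₂ : ∀ y ∈ l₂, y ≤ c) : ∀ x ∈ l₁, x ≤ c := by
  rcases h with rfl | h
  · exact h₂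
  cases l₁ with
  | nil => simp
  | cons a t =>
    have ha : a ≤ c := by
      cases h with
      | rel hr => exact hr.le.trans (h₂ _ List.mem_cons_self)
      | cons _ => exact h₂ a List.mem_cons_self
    intro x hx
    rcases List.mem_cons.1 hx with rfl | hxt
    · exact ha
    · exact ((List.pairwise_cons.1 hs).1 x hxt).trans ha

section

variable {V : Type*}

lemma greyTone_mk (f : V → ℝ) (a b : V) : greyTone f s(a, b) = |f a - f b| := rfl

lemma SimpleGraph.Adj.abs_dist_sub_dist_le_one {G : SimpleGraph V} {x y : V} (hadj : G.Adj x y)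
    (a : V) : |(G.dist x a : ℝ) - G.dist y a| ≤ 1 := by
  rw [dist_comm, dist_comm (u := y)]
  have hle : G.dist a y ≤ G.dist a x + 1 ∧ G.dist a x ≤ G.dist a y + 1 := by
    rcases hadj.diff_dist_adj (u := a) with h | h | h <;> omega
  rw [abs_sub_le_iff]
  constructor <;> linarith [(by exact_mod_cast hle.1 : (G.dist a y : ℝ) ≤ G.dist a x + 1),
    (by exact_mod_cast hle.2 : (G.dist a x : ℝ) ≤ G.dist a y + 1)]

lemma SimpleGraph.Walk.abs_sub_le_mul_length {G : SimpleGraph V} {f : V → ℝ} {c : ℝ}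
    (hc : ∀ e ∈ G.edgeSet, greyTone f e ≤ c) {a b : V} (p : G.Walk a b) :
    |f a - f b| ≤ c * p.length := by
  induction p with
  | nil => simp
  | @cons x y z hxy q ih =>
    have hxy' : |f x - f y| ≤ c := hc s(x, y) hxy
    calc |f x - f z| ≤ |f x - f y| + |f y - f z| := abs_sub_le _ _ _
      _ ≤ c * (q.cons hxy).length := by push_cast [Walk.length_cons]; linarith

lemma SimpleGraph.Reachable.abs_sub_le_mul_dist {G : SimpleGraph V} {f : V → ℝ} {c : ℝ}
    {a b : V} (hab : G.Reachable a b) (hc : ∀ e ∈ G.edgeSet, greyTone f e ≤ c) :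
    |f a - f b| ≤ c * G.dist a b := by
  obtain ⟨p, hp⟩ := hab.exists_walk_length_eq_dist
  exact hp ▸ p.abs_sub_le_mul_length hc

lemma isGreyscale_supportGreyscale {G : SimpleGraph V} {a b : V} {D : ℕ} (hD : 0 < D)
    (hab : G.dist a b = D) (hDub : ∀ x y : V, G.dist x y ≤ D) :
    IsGreyscale (supportGreyscale G a b D) := by
  have hD' : (0 : ℝ) < D := by exact_mod_cast hD
  refine ⟨fun w => ?_, ⟨a, ?_⟩, ⟨b, ?_⟩⟩
  · have hwa : (G.dist w a : ℝ) ≤ D := by exact_mod_cast hDub w a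
    have hwb : (G.dist w b : ℝ) ≤ D := by exact_mod_cast hDub w b
    unfold supportGreyscale
    constructor
    · apply div_nonneg <;> linarith [(Nat.cast_nonneg _ : (0 : ℝ) ≤ G.dist w a)]
    · rw [div_le_one (by positivity)]
      linarith [(Nat.cast_nonneg _ : (0 : ℝ) ≤ G.dist w b)]
  · simp [supportGreyscale, hab]
  · simp only [supportGreyscale, SimpleGraph.dist_self, dist_comm (u := b), hab, Nat.cast_zero]
    field_simp
    ring

lemma greyTone_supportGreyscale_le {G : SimpleGraph V} (a b : V) (D : ℕ) {e : Sym2 V}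
    (he : e ∈ G.edgeSet) : greyTone (supportGreyscale G a b D) e ≤ 1 / D := by
  induction e with
  | _ x y =>
    have hadj : G.Adj x y := he
    have hnum : |((G.dist x a : ℝ) - G.dist y a) - ((G.dist x b : ℝ) - G.dist y b)| ≤ 2 :=
      (abs_sub _ _).trans (by
        linarith [hadj.abs_dist_sub_dist_le_one a, hadj.abs_dist_sub_dist_le_one b])
    calc greyTone (supportGreyscale G a b D) s(x, y)
        = |((G.dist x a : ℝ) - G.dist y a) - ((G.dist x b : ℝ) - G.dist y b)| / (2 * D) := by
          rw [greyTone_mk, supportGreyscale, supportGreyscale, ← sub_div, abs_div,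
            abs_of_nonneg (by positivity : (0 : ℝ) ≤ 2 * D)]
          ring_nf
      _ ≤ 2 / (2 * D) := by gcongr
      _ = 1 / D := by rw [div_mul_eq_div_div, div_self two_ne_zero]

lemma mem_gradVec [Fintype V] {G : SimpleGraph V} {f : V → ℝ} {x : ℝ} :
    x ∈ gradVec G f ↔ ∃ e ∈ G.edgeSet, greyTone f e = x := by
  simp [gradVec]

lemma GradLE.greyTone_le [Fintype V] {G : SimpleGraph V} {f g : V → ℝ} (h : GradLE G f g)
    {c : ℝ} (hg : ∀ e ∈ G.edgeSet, greyTone g e ≤ c) : ∀ e ∈ G.edgeSet, greyTone f e ≤ c := by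
  have hsorted : (gradVec G f).Pairwise (· ≥ ·) := Multiset.pairwise_sort _ _
  have hvec := List.forall_le_of_lex_of_pairwise_ge hsorted h (c := c) fun y hy => by
    obtain ⟨e, he, rfl⟩ := mem_gradVec.1 hy
    exact hg e he
  exact fun e he => hvec _ (mem_gradVec.2 ⟨e, he, rfl⟩)

end

theorem stmt_12_general {V : Type*} [Fintype V] (G : SimpleGraph V)
    (hG : G.Connected) (D : ℕ)
    (hDub : ∀ a b : V, G.dist a b ≤ D)
    (hDmax : ∃ a b : V, G.dist a b = D)
    (f : V → ℝ) (hmin : IsMinGradGreyscale G f)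
    (u v : V) (h0 : f u = 0) (h1 : f v = 1) :
    G.dist u v = D := by
  obtain ⟨a, b, hab⟩ := hDmax
  have huv : u ≠ v := by rintro rfl; linarith
  have hD : 0 < D := (hG.pos_dist_of_ne huv).trans_le (hDub u v)
  have htone : ∀ e ∈ G.edgeSet, greyTone f e ≤ 1 / D :=
    (hmin.2 _ (isGreyscale_supportGreyscale hD hab hDub)).greyTone_le
      fun _ he => greyTone_supportGreyscale_le a b D he
  have hlip := (hG u v).abs_sub_le_mul_dist htone
  rw [h0, h1, zero_sub, abs_neg, abs_one, one_div_mul_eq_div, one_le_div (by positivity)] at hlip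
  exact le_antisymm (hDub u v) (by exact_mod_cast hlip)

theorem stmt_12 {V : Type*} [Fintype V] [Nontrivial V] (G : SimpleGraph V)
    (hG : G.Connected) (D : ℕ)
    (hDub : ∀ a b : V, G.dist a b ≤ D)
    (hDmax : ∃ a b : V, G.dist a b = D)
    (f : V → ℝ) (hmin : IsMinGradGreyscale G f)
    (u v : V) (h0 : f u = 0) (h1 : f v = 1) :
    G.dist u v = D :=
  stmt_12_general G hG D hDub hDmax f hmin u v h0 h1
end

section
/- Let P be the path graph with vertices w_0, w_1, …, w_n (n ≥ 1) and edges e_i = {w_{i−1}, w_i} for i = 1, …, n, and let f be a minimum gradation greyscale of P. Then f̂(e_i) = 1/n for every i = 1, …, n. -/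
open SimpleGraph

/-!
The linear greyscale `k ↦ k / n` has gradation vector `(1/n, …, 1/n)`, so a minimum gradation
greyscale `f` has a gradation vector lexicographically at most this one. Since `f` attains both `0`
and `1`, the triangle inequality along the path makes its grey tones sum to at least `1 = n · (1/n)`.
A decreasingly sorted list of length `n` that is strictly lexicographically below the constant list
`(c, …, c)` has sum `< n · c`, so the two gradation vectors must coincide.
-/

open Finset

theorem dist_le_sum_dist_succ {α : Type*} [PseudoMetricSpace α] {n : ℕ} (f : Fin (n + 1) → α)
    (a b : Fin (n + 1)) : dist (f a) (f b) ≤ ∑ i : Fin n, dist (f i.castSucc) (f i.succ) := by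
  wlog hab : a ≤ b generalizing a b
  · rw [_root_.dist_comm]; exact this b a (le_of_not_ge hab)
  let g : ℕ → α := fun k => f (Fin.clamp k n)
  have hg : ∀ k : Fin (n + 1), g k = f k := fun k => congrArg f (Fin.ext (min_eq_left k.is_le))
  calc dist (f a) (f b) = dist (g a) (g b) := by rw [hg, hg]
    _ ≤ ∑ i ∈ Ico (a : ℕ) b, dist (g i) (g (i + 1)) := dist_le_Ico_sum_dist g hab
    _ ≤ ∑ i ∈ range n, dist (g i) (g (i + 1)) := by
      refine sum_le_sum_of_subset_of_nonneg ?_ fun _ _ _ => dist_nonneg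
      intro i hi
      simp only [mem_Ico, mem_range] at hi ⊢
      omega
    _ = ∑ i : Fin n, dist (f i.castSucc) (f i.succ) := by
      rw [sum_range fun i => dist (g i) (g (i + 1))]
      refine sum_congr rfl fun i _ => ?_
      rw [← hg i.castSucc, ← hg i.succ, Fin.val_castSucc, Fin.val_succ]

theorem List.sum_lt_nsmul_of_lex_replicate {α : Type*} [AddCommMonoid α] [LinearOrder α]
    [IsOrderedCancelAddMonoid α] {c : α} :
    ∀ {m : ℕ} {L : List α}, L.Pairwise (· ≥ ·) → L.length = m →
      List.Lex (· < ·) L (List.replicate m c) → L.sum < m • c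
  | 0, _, _, _, hlex => by simp at hlex
  | m + 1, a :: L, hL, hlen, hlex => by
    rw [List.pairwise_cons] at hL
    rw [List.length_cons, Nat.add_right_cancel_iff] at hlen
    rw [List.sum_cons, succ_nsmul']
    cases hlex with
    | rel hac =>
      have hLa : L.sum ≤ m • a := hlen ▸ L.sum_le_card_nsmul a hL.1
      exact add_lt_add_of_lt_of_le hac (hLa.trans (nsmul_le_nsmul_right hac.le m))
    | cons hlex =>
      exact add_lt_add_of_le_of_lt le_rfl (sum_lt_nsmul_of_lex_replicate hL.2 hlen hlex)

namespace SimpleGraph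

theorem pathGraph_edge_injective (n : ℕ) :
    Function.Injective fun i : Fin n => s(i.castSucc, i.succ) := by
  intro i j hij
  rcases Sym2.eq_iff.1 hij with ⟨h, -⟩ | ⟨h₁, h₂⟩
  · exact Fin.castSucc_injective _ h
  · have := congrArg Fin.val h₁; have := congrArg Fin.val h₂
    simp only [Fin.val_castSucc, Fin.val_succ] at *
    omega

theorem pathGraph_succ_edgeFinset (n : ℕ) [Fintype (pathGraph (n + 1)).edgeSet] :
    (pathGraph (n + 1)).edgeFinset = univ.map ⟨_, pathGraph_edge_injective n⟩ := by
  ext e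
  induction e using Sym2.ind with
  | _ a b =>
    simp only [mem_edgeFinset, mem_edgeSet, pathGraph_adj, mem_map, mem_univ, true_and,
      Function.Embedding.coeFn_mk, Sym2.eq_iff]
    constructor
    · rintro (h | h)
      · exact ⟨⟨a, by omega⟩, Or.inl ⟨rfl, Fin.ext (by simp [h])⟩⟩
      · exact ⟨⟨b, by omega⟩, Or.inr ⟨rfl, Fin.ext (by simp [h])⟩⟩
    · rintro ⟨i, ⟨rfl, rfl⟩ | ⟨rfl, rfl⟩⟩ <;> simp

end SimpleGraph

variable {n : ℕ}

theorem coe_gradVec_pathGraph (f : Fin (n + 1) → ℝ) :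
    (gradVec (pathGraph (n + 1)) f : Multiset ℝ) =
      univ.val.map fun i : Fin n => |f i.castSucc - f i.succ| := by
  rw [gradVec, Multiset.sort_eq, pathGraph_succ_edgeFinset, map_val, Multiset.map_map]
  rfl

theorem length_gradVec_pathGraph (f : Fin (n + 1) → ℝ) :
    (gradVec (pathGraph (n + 1)) f).length = n := by
  simpa using congrArg Multiset.card (coe_gradVec_pathGraph f)

theorem sum_gradVec_pathGraph (f : Fin (n + 1) → ℝ) :
    (gradVec (pathGraph (n + 1)) f).sum = ∑ i : Fin n, |f i.castSucc - f i.succ| := by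
  rw [← Multiset.sum_coe, coe_gradVec_pathGraph]
  rfl

theorem gradVec_pathGraph_eq_replicate_iff (f : Fin (n + 1) → ℝ) (c : ℝ) :
    gradVec (pathGraph (n + 1)) f = List.replicate n c ↔
      ∀ i : Fin n, |f i.castSucc - f i.succ| = c := by
  rw [← List.perm_replicate, ← Multiset.coe_eq_coe, Multiset.coe_replicate, coe_gradVec_pathGraph,
    Multiset.eq_replicate]
  simp

theorem gradVec_pairwise_ge {V : Type*} [Fintype V] (G : SimpleGraph V) (f : V → ℝ) :
    (gradVec G f).Pairwise (· ≥ ·) :=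
  Multiset.pairwise_sort _ _

noncomputable def linearGreyscale (n : ℕ) (k : Fin (n + 1)) : ℝ := k / n

theorem isGreyscale_linearGreyscale (hn : n ≠ 0) : IsGreyscale (linearGreyscale n) := by
  have hn' : (0 : ℝ) < n := by positivity
  refine ⟨fun k => ⟨by unfold linearGreyscale; positivity, ?_⟩, ⟨0, by simp [linearGreyscale]⟩,
    ⟨Fin.last n, by simp [linearGreyscale, hn]⟩⟩
  rw [linearGreyscale, div_le_one hn']
  exact_mod_cast k.is_le

theorem gradVec_linearGreyscale :
    gradVec (pathGraph (n + 1)) (linearGreyscale n) = List.replicate n (1 / (n : ℝ)) := by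
  refine (gradVec_pathGraph_eq_replicate_iff _ _).2 fun i => ?_
  rw [linearGreyscale, linearGreyscale, ← sub_div, abs_div, Fin.val_castSucc, Fin.val_succ]
  simp

theorem stmt_14_general (n : ℕ) (f : Fin (n + 1) → ℝ)
    (hmin : IsMinGradGreyscale (pathGraph (n + 1)) f) :
    ∀ i : Fin n, |f i.castSucc - f i.succ| = 1 / (n : ℝ) := by
  intro i
  have hn : n ≠ 0 := i.pos.ne'
  obtain ⟨⟨-, ⟨a, ha⟩, ⟨b, hb⟩⟩, hle⟩ := hmin
  rcases hle _ (isGreyscale_linearGreyscale hn) with heq | hlex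
  · exact (gradVec_pathGraph_eq_replicate_iff f _).1 (heq.trans gradVec_linearGreyscale) i
  · rw [gradVec_linearGreyscale] at hlex
    have hlt := List.sum_lt_nsmul_of_lex_replicate (gradVec_pairwise_ge _ f)
      (length_gradVec_pathGraph f) hlex
    rw [sum_gradVec_pathGraph, nsmul_eq_mul, mul_one_div_cancel (by positivity)] at hlt
    have hge : 1 ≤ ∑ j : Fin n, |f j.castSucc - f j.succ| := by
      simpa [Real.dist_eq, ha, hb] using dist_le_sum_dist_succ f b a
    linarith

theorem stmt_14 (n : ℕ) (hn : 1 ≤ n) (f : Fin (n + 1) → ℝ)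
    (hmin : IsMinGradGreyscale (pathGraph (n + 1)) f) :
    ∀ i : Fin n, |f i.castSucc - f i.succ| = 1 / (n : ℝ) :=
  stmt_14_general n f hmin
end

section
/- Let G be a finite simple connected graph with vertex set V, let V_c be a nonempty proper subset of V, and let g : V_c → [0,1] be an incomplete V_c-greyscale of G such that the value 0 is attained by g but the value 1 is not. Then there exists a greyscale f of G compatible with g whose gradation vector is lexicographically minimal among the gradation vectors of all greyscales of G compatible with g. -/
/-!
The compatible greyscales form a nonempty compact subset of `ℝ^V`: extending `g` by `1` off
`V_c` gives one, since `g` already attains `0`. A gradation vector is the antitone rearrangement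
of the vector of grey tones, so the gradation vectors of a compact set of greyscales again form a
compact set (one compact piece per permutation of the edges), and a compact subset of `ℝ^m` has a
lexicographic minimum: minimise the first coordinate, then recurse on the compact slice where
that minimum is attained.
-/

open SimpleGraph

section LexMin

variable {α : Type*} [LinearOrder α]

theorem exists_perm_antitone_comp {n : ℕ} (v : Fin n → α) :
    ∃ σ : Equiv.Perm (Fin n), Antitone (v ∘ σ) :=
  ⟨Tuple.sort (OrderDual.toDual ∘ v), Tuple.monotone_sort (OrderDual.toDual ∘ v)⟩

theorem sort_ofFn_eq_ofFn_comp {n : ℕ} {v : Fin n → α} {σ : Equiv.Perm (Fin n)}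
    (h : Antitone (v ∘ σ)) :
    Multiset.sort (List.ofFn v : Multiset α) (· ≥ ·) = List.ofFn (v ∘ σ) := by
  rw [← Multiset.coe_eq_coe.mpr (σ.ofFn_comp_perm v), Multiset.coe_sort]
  exact List.mergeSort_eq_self _ (List.pairwise_ofFn.mpr fun _ _ hij => h hij.le)

variable [TopologicalSpace α] [OrderClosedTopology α]

theorem IsCompact.exists_forall_ofFn_le {n : ℕ} {S : Set (Fin n → α)} (hS : IsCompact S)
    (hne : S.Nonempty) : ∃ x ∈ S, ∀ y ∈ S, List.ofFn x ≤ List.ofFn y := by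
  induction n with
  | zero =>
    obtain ⟨x, hx⟩ := hne
    exact ⟨x, hx, fun y _ => by simp⟩
  | succ n ih =>
    obtain ⟨x₀, hx₀, hmin⟩ := hS.exists_isMinOn hne (continuous_apply 0).continuousOn
    set S₀ := S ∩ {x | x 0 = x₀ 0}
    have hS₀ : IsCompact S₀ :=
      hS.inter_right (isClosed_eq (continuous_apply 0) continuous_const)
    have htail : Continuous fun x : Fin (n + 1) → α => Fin.tail x :=
      continuous_pi fun i => continuous_apply i.succ
    obtain ⟨_, ⟨x, hxS₀, rfl⟩, hx⟩ :=
      ih (hS₀.image htail) ((show S₀.Nonempty from ⟨x₀, hx₀, rfl⟩).image _)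
    refine ⟨x, hxS₀.1, fun y hy => ?_⟩
    rw [List.ofFn_succ, List.ofFn_succ, hxS₀.2]
    have hy₀ : x₀ 0 ≤ y 0 := hmin hy
    rcases hy₀.lt_or_eq with hlt | heq
    · exact le_of_lt (List.Lex.rel hlt)
    · rw [heq]
      exact List.cons_le_cons _ (hx _ ⟨y, ⟨hy, heq.symm⟩, rfl⟩)

theorem IsCompact.exists_forall_sort_le {X : Type*} [TopologicalSpace X] {K : Set X}
    (hK : IsCompact K) (hne : K.Nonempty) {n : ℕ} {τ : X → Fin n → α} (hτ : Continuous τ) :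
    ∃ f ∈ K, ∀ h ∈ K, Multiset.sort (List.ofFn (τ f) : Multiset α) (· ≥ ·) ≤
      Multiset.sort (List.ofFn (τ h) : Multiset α) (· ≥ ·) := by
  set S := ⋃ σ : Equiv.Perm (Fin n), (fun f => τ f ∘ σ) '' K ∩ {x | Antitone x}
  have hS : IsCompact S := isCompact_iUnion fun σ =>
    (hK.image (continuous_pi fun i => (continuous_apply (σ i)).comp hτ)).inter_right
      isClosed_antitone
  have hsort : ∀ f ∈ K, ∃ x ∈ S,
      Multiset.sort (List.ofFn (τ f) : Multiset α) (· ≥ ·) = List.ofFn x := by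
    intro f hf
    obtain ⟨σ, hσ⟩ := exists_perm_antitone_comp (τ f)
    exact ⟨τ f ∘ σ, Set.mem_iUnion.mpr ⟨σ, ⟨f, hf, rfl⟩, hσ⟩, sort_ofFn_eq_ofFn_comp hσ⟩
  obtain ⟨f₀, hf₀⟩ := hne
  obtain ⟨_, hxS, hx⟩ :=
    hS.exists_forall_ofFn_le (let ⟨x, hx, _⟩ := hsort f₀ hf₀; ⟨x, hx⟩)
  obtain ⟨σ, ⟨f, hf, rfl⟩, hσ⟩ := Set.mem_iUnion.mp hxS
  refine ⟨f, hf, fun h hh => ?_⟩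
  obtain ⟨y, hyS, hy⟩ := hsort h hh
  rw [sort_ofFn_eq_ofFn_comp hσ, hy]
  exact hx y hyS

end LexMin

theorem continuous_greyTone {V : Type*} (e : Sym2 V) :
    Continuous fun f : V → ℝ => greyTone f e := by
  induction e using Sym2.ind with
  | _ a b => exact ((continuous_apply a).sub (continuous_apply b)).abs

theorem exists_gradVec_eq_sort_ofFn {V : Type*} [Fintype V] (G : SimpleGraph V) :
    ∃ (n : ℕ) (e : Fin n → Sym2 V), ∀ f : V → ℝ,
      gradVec G f = Multiset.sort (List.ofFn fun i => greyTone f (e i) : Multiset ℝ) (· ≥ ·) := by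
  classical
  refine ⟨_, G.edgeFinset.val.toList.get, fun f => ?_⟩
  rw [← Function.comp_def (greyTone f), ← List.map_ofFn, List.ofFn_get]
  unfold gradVec
  congr 1
  rw [← Multiset.map_coe, Multiset.coe_toList]

theorem gradLE_iff_le {V : Type*} [Fintype V] {G : SimpleGraph V} {f h : V → ℝ} :
    GradLE G f h ↔ gradVec G f ≤ gradVec G h :=
  le_iff_eq_or_lt.symm

theorem IsCompact.exists_forall_gradLE {V : Type*} [Fintype V] (G : SimpleGraph V)
    {K : Set (V → ℝ)} (hK : IsCompact K) (hne : K.Nonempty) :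
    ∃ f ∈ K, ∀ h ∈ K, GradLE G f h := by
  obtain ⟨n, e, he⟩ := exists_gradVec_eq_sort_ofFn G
  obtain ⟨f, hf, hmin⟩ := hK.exists_forall_sort_le hne
    (continuous_pi fun i => continuous_greyTone (e i))
  exact ⟨f, hf, fun h hh => gradLE_iff_le.mpr (by simpa only [he] using hmin h hh)⟩

theorem isCompact_setOf_isGreyscale {V : Type*} [Finite V] :
    IsCompact {f : V → ℝ | IsGreyscale f} := by
  refine (isCompact_univ_pi fun _ => isCompact_Icc).of_isClosed_subset ?_
    fun f hf => Set.mem_univ_pi.mpr fun w => hf.1 w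
  simp only [IsGreyscale, Set.ofPred_and, Set.ofPred_forall, Set.ofPred_exists]
  refine (isClosed_iInter fun w => ?_).inter
    ((isClosed_iUnion_of_finite fun a => ?_).inter (isClosed_iUnion_of_finite fun b => ?_))
  · exact (isClosed_le continuous_const (continuous_apply w)).inter
      (isClosed_le (continuous_apply w) continuous_const)
  · exact isClosed_eq (continuous_apply a) continuous_const
  · exact isClosed_eq (continuous_apply b) continuous_const

theorem stmt_18_general {V : Type*} [Fintype V] (G : SimpleGraph V)
    (Vc : Set V) (hproper : Vc ≠ Set.univ)
    (g : Vc → ℝ) (hg : ∀ u : Vc, 0 ≤ g u ∧ g u ≤ 1)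
    (h0 : ∃ a : Vc, g a = 0) :
    ∃ f : V → ℝ, IsGreyscale f ∧ (∀ u : Vc, f u = g u) ∧
      ∀ h : V → ℝ, IsGreyscale h → (∀ u : Vc, h u = g u) → GradLE G f h := by
  classical
  set K := {f : V → ℝ | IsGreyscale f} ∩ ⋂ u : Vc, {f | f u = g u}
  have hK : IsCompact K := isCompact_setOf_isGreyscale.inter_right
    (isClosed_iInter fun u => isClosed_eq (continuous_apply _) continuous_const)
  have hne : K.Nonempty := by
    obtain ⟨b, hb⟩ := Set.ne_univ_iff_exists_notMem _ |>.mp hproper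
    obtain ⟨a, ha⟩ := h0
    refine ⟨fun v => if hv : v ∈ Vc then g ⟨v, hv⟩ else 1,
      ⟨fun w => ?_, ⟨a, by simp [ha]⟩, ⟨b, dif_neg hb⟩⟩, Set.mem_iInter.mpr fun u => dif_pos u.2⟩
    by_cases hw : w ∈ Vc
    · simpa only [dif_pos hw] using hg ⟨w, hw⟩
    · simp only [dif_neg hw, zero_le_one, le_refl, and_self]
  obtain ⟨f, ⟨hf, hfg⟩, hmin⟩ := hK.exists_forall_gradLE G hne
  exact ⟨f, hf, Set.mem_iInter.mp hfg, fun h hh hhg => hmin h ⟨hh, Set.mem_iInter.mpr hhg⟩⟩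

theorem stmt_18 {V : Type*} [Fintype V] (G : SimpleGraph V) (hG : G.Connected)
    (Vc : Set V) (hne : Vc.Nonempty) (hproper : Vc ≠ Set.univ)
    (g : Vc → ℝ) (hg : ∀ u : Vc, 0 ≤ g u ∧ g u ≤ 1)
    (h0 : ∃ a : Vc, g a = 0) (h1 : ¬ ∃ b : Vc, g b = 1) :
    ∃ f : V → ℝ, IsGreyscale f ∧ (∀ u : Vc, f u = g u) ∧
      ∀ h : V → ℝ, IsGreyscale h → (∀ u : Vc, h u = g u) → GradLE G f h :=
  stmt_18_general G Vc hproper g hg h0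
end
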